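/- arXiv:2112.08042 — 2 statements merged into one kernel-verified Lean document; each statement's English description precedes it below -/
import Mathlib

section
/- Let n ≥ 2 be an even integer and let α_n ∈ (0,1) be the unique fixed point of f_n in (0,1). If f_n′(α_n) > 0, then the basin of attraction of α_n contains [0,1): for every x_0 ∈ [0,1), the sequence of iterates u_0 = x_0, u_{m+1} = f_n(u_m) converges to α_n as m → ∞. -/
open Real Filter Finset


lemma cos_pow_odd (k : ℕ) : ∫ x in (0:ℝ)..π, cos x ^ (2*k+1) = 0 := by
  induction k with
  | zero => simpa using integral_cos (a := 0) (b := π)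
  | succ k ih =>
      have h := integral_cos_pow (a := 0) (b := π) (n := 2*k+1)
      have : 2*(k+1)+1 = 2*k+1+2 := by ring
      rw [this, h, ih]
      simp

lemma cos_pow_even (k : ℕ) :
    ∫ x in (0:ℝ)..π, cos x ^ (2*k) = π * (Nat.centralBinom k) / 4 ^ k := by
  induction k with
  | zero => simp [Nat.centralBinom]
  | succ k ih =>
      have h := integral_cos_pow (a := 0) (b := π) (n := 2*k)
      have h2 : 2*(k+1) = 2*k+2 := by ring
      rw [h2, h, ih]
      have hc : ((k:ℝ)+1) * (Nat.centralBinom (k+1)) = 2 * (2*k+1) * Nat.centralBinom k := by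
        exact_mod_cast congrArg (Nat.cast (R := ℝ)) (Nat.succ_mul_centralBinom_succ k)
      have h4 : (4:ℝ)^(k+1) = 4 * 4^k := by ring
      have hk1 : ((k:ℝ)+1) ≠ 0 := by positivity
      have h4k : (4:ℝ)^k ≠ 0 := by positivity
      have hcb : ((Nat.centralBinom (k+1)):ℝ) = 2*(2*(k:ℝ)+1)*Nat.centralBinom k/((k:ℝ)+1) := by
        field_simp
        linarith [hc]
      rw [hcb]
      push_cast
      field_simp
      simp only [sin_pi, sin_zero]
      ring

/-- `f n t = ∑_{k, 0 ≤ 2k ≤ n} C(n,2k)·C(2k,k)·((1−t)/2)^{2k}·t^{n−2k}` -/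
noncomputable def f (n : ℕ) (t : ℝ) : ℝ :=
  ∑ k ∈ Finset.range (n / 2 + 1),
    (n.choose (2 * k) : ℝ) * ((2 * k).choose k : ℝ) * ((1 - t) / 2) ^ (2 * k) * t ^ (n - 2 * k)

lemma f_eq (n : ℕ) (t : ℝ) :
    f n t = (1/π) * ∫ x in (0:ℝ)..π, (t + (1-t)*cos x)^n := by
  have expand : ∀ x : ℝ, (t + (1-t)*cos x)^n
      = ∑ j ∈ range (n+1), ((n.choose j : ℝ) * (1-t)^j * t^(n-j)) * cos x ^ j := by
    intro x
    rw [show t + (1-t)*cos x = (1-t)*cos x + t by ring, add_pow]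
    refine Finset.sum_congr rfl fun j hj => ?_
    rw [mul_pow]
    ring
  have hint : ∀ j : ℕ, IntervalIntegrable
      (fun x => ((n.choose j : ℝ) * (1-t)^j * t^(n-j)) * cos x ^ j)
      MeasureTheory.volume 0 π := fun j => (by fun_prop : Continuous _).intervalIntegrable _ _
  have h1 : (∫ x in (0:ℝ)..π, (t + (1-t)*cos x)^n)
      = ∑ j ∈ range (n+1), ((n.choose j : ℝ) * (1-t)^j * t^(n-j)) * ∫ x in (0:ℝ)..π, cos x ^ j := by
    simp_rw [expand]
    rw [intervalIntegral.integral_finset_sum (fun j _ => hint j)]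
    exact Finset.sum_congr rfl fun j _ => intervalIntegral.integral_const_mul _ _
  rw [h1]
  rw [← Finset.sum_filter_add_sum_filter_not (range (n+1)) (fun j => Even j)]
  have hodd : ∑ j ∈ (range (n+1)).filter (fun j => ¬ Even j),
      ((n.choose j : ℝ) * (1-t)^j * t^(n-j)) * ∫ x in (0:ℝ)..π, cos x ^ j = 0 := by
    refine Finset.sum_eq_zero fun j hj => ?_
    have hj' : ¬ Even j := (Finset.mem_filter.mp hj).2
    obtain ⟨m, hm⟩ := Nat.not_even_iff_odd.mp hj'
    rw [hm, cos_pow_odd, mul_zero]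
  rw [hodd, add_zero]
  have hset : (range (n+1)).filter (fun j => Even j) = (range (n/2+1)).image (fun k => 2*k) := by
    ext j
    simp only [Finset.mem_filter, Finset.mem_range, Finset.mem_image]
    constructor
    · rintro ⟨hj, m, hm⟩
      exact ⟨m, by omega, by omega⟩
    · rintro ⟨k, hk, rfl⟩
      exact ⟨by omega, even_two_mul k⟩
  rw [hset, Finset.sum_image (fun a _ b _ h => by omega)]
  unfold f
  rw [Finset.mul_sum]
  refine Finset.sum_congr rfl fun k hk => ?_
  rw [cos_pow_even]
  have hcb : ((Nat.centralBinom k : ℝ)) = ((2*k).choose k : ℝ) := by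
    rw [Nat.centralBinom]
  have h2 : ((1-t)/2)^(2*k) = (1-t)^(2*k) / 4^k := by
    rw [div_pow]
    congr 1
    rw [pow_mul]
    norm_num
  rw [hcb, h2]
  have hpi : (π:ℝ) ≠ 0 := Real.pi_ne_zero
  field_simp

lemma f_cont (n : ℕ) : Continuous (f n) := by
  unfold f
  apply continuous_finset_sum
  intro k _
  fun_prop

lemma f_diff (n : ℕ) : Differentiable ℝ (f n) := by
  unfold f
  apply Differentiable.fun_sum
  intro k _
  fun_prop

lemma f_convex (n : ℕ) (heven : Even n) : ConvexOn ℝ Set.univ (f n) := by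
  refine ⟨convex_univ, fun x _ y _ a b ha hb hab => ?_⟩
  simp only [smul_eq_mul]
  rw [f_eq, f_eq, f_eq]
  have hpt : ∀ θ : ℝ, ((a*x+b*y) + (1-(a*x+b*y))*cos θ)^n
      ≤ a*((x+(1-x)*cos θ)^n) + b*((y+(1-y)*cos θ)^n) := by
    intro θ
    have key := (Even.convexOn_pow (𝕜 := ℝ) heven).2 (Set.mem_univ (x+(1-x)*cos θ))
      (Set.mem_univ (y+(1-y)*cos θ)) ha hb hab
    simp only [smul_eq_mul] at key
    have harr : (a*x+b*y) + (1-(a*x+b*y))*cos θ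
        = a*(x+(1-x)*cos θ) + b*(y+(1-y)*cos θ) := by
      have hb1 : b = 1 - a := by linarith
      rw [hb1]; ring
    rw [harr]
    exact key
  have hi1 : IntervalIntegrable (fun θ => ((a*x+b*y) + (1-(a*x+b*y))*cos θ)^n)
      MeasureTheory.volume 0 π := (by fun_prop : Continuous _).intervalIntegrable _ _
  have hix : IntervalIntegrable (fun θ => (x+(1-x)*cos θ)^n)
      MeasureTheory.volume 0 π := (by fun_prop : Continuous _).intervalIntegrable _ _
  have hiy : IntervalIntegrable (fun θ => (y+(1-y)*cos θ)^n)
      MeasureTheory.volume 0 π := (by fun_prop : Continuous _).intervalIntegrable _ _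
  have hi2 : IntervalIntegrable (fun θ => a*((x+(1-x)*cos θ)^n) + b*((y+(1-y)*cos θ)^n))
      MeasureTheory.volume 0 π := (by fun_prop : Continuous _).intervalIntegrable _ _
  have hmono := intervalIntegral.integral_mono_on Real.pi_pos.le hi1 hi2 (fun θ _ => hpt θ)
  have hsplit : (∫ θ in (0:ℝ)..π, (a*((x+(1-x)*cos θ)^n) + b*((y+(1-y)*cos θ)^n)))
      = a * (∫ θ in (0:ℝ)..π, (x+(1-x)*cos θ)^n) + b * (∫ θ in (0:ℝ)..π, (y+(1-y)*cos θ)^n) := by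
    rw [intervalIntegral.integral_add ((hix.const_mul a)) ((hiy.const_mul b)),
      intervalIntegral.integral_const_mul, intervalIntegral.integral_const_mul]
  calc (1/π) * ∫ θ in (0:ℝ)..π, ((a*x+b*y) + (1-(a*x+b*y))*cos θ)^n
      ≤ (1/π) * ∫ θ in (0:ℝ)..π, (a*((x+(1-x)*cos θ)^n) + b*((y+(1-y)*cos θ)^n)) := by
        apply mul_le_mul_of_nonneg_left hmono
        positivity
    _ = a * ((1/π) * ∫ θ in (0:ℝ)..π, (x+(1-x)*cos θ)^n)
        + b * ((1/π) * ∫ θ in (0:ℝ)..π, (y+(1-y)*cos θ)^n) := by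
        rw [hsplit]; ring

lemma f_one (n : ℕ) (hn : 1 ≤ n) : f n 1 = 1 := by
  unfold f
  rw [Finset.sum_eq_single 0]
  · simp
  · intro k _ hk
    have : ((1:ℝ) - 1)/2 = 0 := by norm_num
    rw [this, zero_pow (by omega), mul_zero, zero_mul]
  · intro h
    exact absurd (Finset.mem_range.mpr (by omega)) h

lemma f_zero (n : ℕ) (heven : Even n) : f n 0 = (n.choose (n/2) : ℝ) / 2^n := by
  obtain ⟨m, hm⟩ := heven
  have hm2 : n / 2 = m := by omega
  unfold f
  rw [Finset.sum_eq_single (n/2)]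
  · rw [hm2]
    have h1 : n - 2*m = 0 := by omega
    have h2 : n.choose (2*m) = 1 := by rw [show 2*m = n by omega]; simp
    rw [h1, h2, pow_zero, mul_one]
    have : ((1:ℝ) - 0)/2 = 1/2 := by norm_num
    rw [this, div_pow, one_pow, show 2*m = n by omega]
    push_cast
    ring
  · intro k hk hkne
    have : n - 2*k ≠ 0 := by
      simp only [Finset.mem_range] at hk
      omega
    rw [zero_pow this, mul_zero]
  · intro h
    exact absurd (Finset.mem_range.mpr (by omega)) h

lemma f_zero_pos (n : ℕ) (heven : Even n) : 0 < f n 0 := by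
  rw [f_zero n heven]
  have : 0 < n.choose (n/2) := Nat.choose_pos (by omega)
  positivity

lemma f_zero_lt_one (n : ℕ) (hn : 2 ≤ n) (heven : Even n) : f n 0 < 1 := by
  rw [f_zero n heven]
  rw [div_lt_one (by positivity)]
  have key : n.choose (n/2) + n.choose 0 ≤ 2^n := by
    have hsub : ({n/2, 0} : Finset ℕ) ⊆ Finset.range (n+1) := by
      intro x hx
      simp only [Finset.mem_insert, Finset.mem_singleton] at hx
      rcases hx with rfl | rfl <;> simp [Finset.mem_range] <;> omega
    have hne : (n/2 : ℕ) ≠ 0 := by omega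
    calc n.choose (n/2) + n.choose 0 = ∑ m ∈ ({n/2, 0} : Finset ℕ), n.choose m := by
          rw [Finset.sum_insert (by simp [hne]), Finset.sum_singleton]
      _ ≤ ∑ m ∈ Finset.range (n+1), n.choose m :=
          Finset.sum_le_sum_of_subset hsub
      _ = 2^n := Nat.sum_range_choose n
  have : (n.choose (n/2) : ℝ) + 1 ≤ 2^n := by
    have := key
    simp only [Nat.choose_zero_right] at this
    exact_mod_cast this
  linarith

theorem stmt_8 (n : ℕ) (hn : 2 ≤ n) (heven : Even n) (α : ℝ)
    (hα : α ∈ Set.Ioo (0 : ℝ) 1) (hfix : f n α = α)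
    (huniq : ∀ t ∈ Set.Ioo (0 : ℝ) 1, f n t = t → t = α)
    (hderiv : 0 < deriv (f n) α) :
    ∀ x₀ ∈ Set.Ico (0 : ℝ) 1,
      Filter.Tendsto (fun m => (f n)^[m] x₀) Filter.atTop (nhds α) := by
  intro x₀ hx₀
  obtain ⟨hα0, hα1⟩ := hα
  have hcont := f_cont n
  have hconv := f_convex n heven
  have hf1 := f_one n (by omega)
  have hub : ∀ t ∈ Set.Icc α 1, f n t ≤ t := by
    rintro t ⟨ht1, ht2⟩
    have h1α : (0:ℝ) < 1 - α := by linarith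
    set a := (1 - t)/(1 - α) with hadef
    set b := (t - α)/(1 - α) with hbdef
    have ha : 0 ≤ a := div_nonneg (by linarith) h1α.le
    have hb : 0 ≤ b := div_nonneg (by linarith) h1α.le
    have hab : a + b = 1 := by
      rw [hadef, hbdef, ← add_div, div_eq_one_iff_eq (ne_of_gt h1α)]
      ring
    have hcomb : a * α + b * 1 = t := by
      rw [hadef, hbdef, mul_one, div_mul_eq_mul_div, ← add_div,
        div_eq_iff (ne_of_gt h1α)]
      ring
    have hch := hconv.2 (Set.mem_univ α) (Set.mem_univ 1) ha hb hab
    simp only [smul_eq_mul] at hch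
    rw [hfix, hf1] at hch
    rw [hcomb] at hch
    exact hch
  have hd : ∀ x ∈ Set.univ, DifferentiableAt ℝ (f n) x := fun x _ => (f_diff n) x
  have hmd : MonotoneOn (deriv (f n)) Set.univ := hconv.monotoneOn_deriv hd
  have hsm : StrictMonoOn (f n) (Set.Icc α 1) := by
    apply strictMonoOn_of_deriv_pos (convex_Icc α 1) hcont.continuousOn
    intro x hx
    rw [interior_Icc] at hx
    exact lt_of_lt_of_le hderiv (hmd (Set.mem_univ α) (Set.mem_univ x) hx.1.le)
  have hlb : ∀ t ∈ Set.Ico α 1, α ≤ f n t := by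
    rintro t ⟨ht1, ht2⟩
    rcases eq_or_lt_of_le ht1 with rfl | hlt
    · rw [hfix]
    · have h := hsm (Set.mem_Icc.mpr ⟨le_refl α, hα1.le⟩) (Set.mem_Icc.mpr ⟨ht1, ht2.le⟩) hlt
      rw [hfix] at h
      exact h.le
  have hlt1 : ∀ t ∈ Set.Ico 0 1, f n t < 1 := by
    rintro t ⟨ht0, ht1'⟩
    have hch := hconv.2 (Set.mem_univ (0:ℝ)) (Set.mem_univ (1:ℝ))
      (show (0:ℝ) ≤ 1 - t by linarith) ht0 (show (1-t) + t = 1 by ring)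
    simp only [smul_eq_mul] at hch
    have harg : (1-t)*0 + t*1 = t := by ring
    rw [harg, hf1] at hch
    have h0 := f_zero_lt_one n hn heven
    nlinarith
  have hgt : ∀ t, 0 ≤ t → t < α → t < f n t := by
    intro t ht0 htα
    by_contra hcon
    push_neg at hcon
    rcases eq_or_lt_of_le hcon with heq | hlt'
    · rcases eq_or_lt_of_le ht0 with rfl | ht0'
      · have := f_zero_pos n heven
        linarith
      · have := huniq t ⟨ht0', htα.trans hα1⟩ heq
        exact absurd this (ne_of_lt htα)
    · set g : ℝ → ℝ := fun s => f n s - s with hgdef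
      have hgc : ContinuousOn g (Set.Icc 0 t) := (hcont.sub continuous_id).continuousOn
      have h0mem : (0:ℝ) ∈ Set.Ioo (g t) (g 0) := by
        constructor
        · show f n t - t < 0; linarith
        · show 0 < f n 0 - 0; have := f_zero_pos n heven; linarith
      obtain ⟨s, hs, hgs⟩ := intermediate_value_Ioo' ht0 hgc h0mem
      have hfs : f n s = s := by
        have : f n s - s = 0 := hgs
        linarith
      have hsα := huniq s ⟨hs.1, lt_trans (lt_trans hs.2 htα) hα1⟩ hfs
      rw [hsα] at hs
      linarith [hs.2]
  have hstep : ∀ t ∈ Set.Ico 0 1, f n t ∈ Set.Ico 0 1 := by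
    rintro t ⟨ht0, ht1'⟩
    refine ⟨?_, hlt1 t ⟨ht0, ht1'⟩⟩
    by_cases h : t < α
    · exact le_of_lt (lt_of_le_of_lt ht0 (hgt t ht0 h))
    · push_neg at h
      exact le_trans hα0.le (hlb t ⟨h, ht1'⟩)
  set u : ℕ → ℝ := fun m => (f n)^[m] x₀ with hudef
  have husucc : ∀ m, u (m+1) = f n (u m) := fun m => Function.iterate_succ_apply' (f n) m x₀
  have humem : ∀ m, u m ∈ Set.Ico 0 1 := by
    intro m
    induction m with
    | zero => exact hx₀
    | succ m ih => rw [husucc]; exact hstep _ ih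
  by_cases hcase : ∀ m, u m < α
  · have hmono : Monotone u := monotone_nat_of_le_succ (fun m => by
      rw [husucc]; exact (hgt (u m) (humem m).1 (hcase m)).le)
    have hbdd : BddAbove (Set.range u) := ⟨α, by rintro _ ⟨m, rfl⟩; exact (hcase m).le⟩
    have hlim := tendsto_atTop_ciSup hmono hbdd
    set L := ⨆ m, u m with hL
    have hLα : L ≤ α := ciSup_le (fun m => (hcase m).le)
    have hL0 : 0 ≤ L := le_trans (humem 0).1 (le_ciSup hbdd 0)
    have hfixL : f n L = L := by
      have h1 : Tendsto (fun m => u (m+1)) atTop (nhds L) := (tendsto_add_atTop_iff_nat 1).mpr hlim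
      have h2 : Tendsto (fun m => f n (u m)) atTop (nhds (f n L)) := (hcont.tendsto L).comp hlim
      have h3 : (fun m => u (m+1)) = fun m => f n (u m) := funext husucc
      rw [h3] at h1
      exact tendsto_nhds_unique h2 h1
    have hLeq : L = α := by
      rcases eq_or_lt_of_le hLα with h | h
      · exact h
      · exfalso
        have := hgt L hL0 h
        rw [hfixL] at this
        exact lt_irrefl _ this
    exact hLeq ▸ hlim
  · push_neg at hcase
    obtain ⟨m₀, hm₀⟩ := hcase
    set v : ℕ → ℝ := fun j => u (j + m₀) with hvdef
    have hvsucc : ∀ j, v (j+1) = f n (v j) := by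
      intro j
      show u (j + 1 + m₀) = f n (u (j + m₀))
      rw [show j+1+m₀ = (j+m₀)+1 by omega, husucc]
    have hv0 : v 0 ∈ Set.Ico α 1 := by
      show u (0 + m₀) ∈ _
      rw [Nat.zero_add]
      exact ⟨hm₀, (humem m₀).2⟩
    have hvmem : ∀ j, v j ∈ Set.Ico α 1 := by
      intro j
      induction j with
      | zero => exact hv0
      | succ j ih =>
        rw [hvsucc]
        exact ⟨hlb _ ih, lt_of_le_of_lt (hub _ ⟨ih.1, ih.2.le⟩) ih.2⟩
    have hanti : Antitone v := antitone_nat_of_succ_le (fun j => by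
      rw [hvsucc]; exact hub _ ⟨(hvmem j).1, (hvmem j).2.le⟩)
    have hbdd : BddBelow (Set.range v) := ⟨α, by rintro _ ⟨j, rfl⟩; exact (hvmem j).1⟩
    have hlim := tendsto_atTop_ciInf hanti hbdd
    set L := ⨅ j, v j with hL
    have hαL : α ≤ L := le_ciInf (fun j => (hvmem j).1)
    have hL1 : L < 1 := lt_of_le_of_lt (ciInf_le hbdd 0) (hvmem 0).2
    have hfixL : f n L = L := by
      have h1 : Tendsto (fun j => v (j+1)) atTop (nhds L) := (tendsto_add_atTop_iff_nat 1).mpr hlim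
      have h2 : Tendsto (fun j => f n (v j)) atTop (nhds (f n L)) := (hcont.tendsto L).comp hlim
      have h3 : (fun j => v (j+1)) = fun j => f n (v j) := funext hvsucc
      rw [h3] at h1
      exact tendsto_nhds_unique h2 h1
    have hLeq : L = α := huniq L ⟨lt_of_lt_of_le hα0 hαL, hL1⟩ hfixL
    have hvlim : Tendsto v atTop (nhds α) := hLeq ▸ hlim
    exact (tendsto_add_atTop_iff_nat m₀).mp hvlim
end

section
/- Let p ∈ (0,1). For every t ∈ [0,1], the series ∑_{n≥2} p(1−p)^{n−2}·f_n(t) converges and equals (p/(1−p)²)·( −((1−p)t + 1) + 1/√(p(2 − p + 2t(p−1))) ). -/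
open Real Filter Finset

noncomputable def cb (k : ℕ) : ℝ := (Nat.centralBinom k : ℝ)

lemma cb_key (i : ℕ) : ((i:ℝ)+1) * cb (i+1) = 2*(2*i+1) * cb i := by
  have h := Nat.succ_mul_centralBinom_succ i
  have h2 : (((i+1) * Nat.centralBinom (i+1) : ℕ) : ℝ) = ((2 * (2*i+1) * Nat.centralBinom i : ℕ) : ℝ) := by
    exact_mod_cast congrArg (Nat.cast (R := ℝ)) h
  push_cast at h2
  unfold cb; linarith

lemma cb_conv (n : ℕ) : ∑ i ∈ range (n+1), cb i * cb (n-i) = 4^n := by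
  induction n with
  | zero => simp [cb, Nat.centralBinom]
  | succ n ih =>
    set S : ℕ → ℝ := fun m => ∑ i ∈ range (m+1), cb i * cb (m-i) with hS
    have hA2 : ∑ i ∈ range (n+1), ((2*(i:ℝ)+1) * (cb i * cb (n-i)))
        + ∑ i ∈ range (n+1), ((2*(i:ℝ)+1) * (cb i * cb (n-i))) = (2*n+2) * S n := by
      nth_rewrite 2 [← Finset.sum_range_reflect]
      simp only [Nat.add_sub_cancel]
      rw [← Finset.sum_add_distrib, hS, Finset.mul_sum]
      apply Finset.sum_congr rfl
      intro i hi
      rw [Finset.mem_range] at hi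
      have hin : i ≤ n := by omega
      have h1 : n - (n - i) = i := by omega
      have h2 : ((n - i : ℕ) : ℝ) = (n : ℝ) - i := by
        push_cast [Nat.cast_sub hin]; ring
      rw [h1, h2]
      ring
    have hB2 : ∑ i ∈ range (n+2), ((i:ℝ) * (cb i * cb (n+1-i)))
        + ∑ i ∈ range (n+2), ((i:ℝ) * (cb i * cb (n+1-i))) = (n+1) * S (n+1) := by
      nth_rewrite 2 [← Finset.sum_range_reflect]
      simp only [show ∀ m:ℕ, m + 2 - 1 = m + 1 from fun m => rfl]
      rw [← Finset.sum_add_distrib, hS, Finset.mul_sum]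
      apply Finset.sum_congr rfl
      intro i hi
      rw [Finset.mem_range] at hi
      have hin : i ≤ n+1 := by omega
      have h1 : n + 1 - (n + 1 - i) = i := by omega
      have h2 : ((n + 1 - i : ℕ) : ℝ) = (n : ℝ) + 1 - i := by
        push_cast [Nat.cast_sub hin]; ring
      rw [h1, h2]
      ring
    have hBA : ∑ i ∈ range (n+2), ((i:ℝ) * (cb i * cb (n+1-i)))
        = 2 * ∑ i ∈ range (n+1), ((2*(i:ℝ)+1) * (cb i * cb (n-i))) := by
      rw [Finset.sum_range_succ' (fun i => (i:ℝ) * (cb i * cb (n+1-i))) (n+1)]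
      simp only [Nat.cast_zero, zero_mul, add_zero]
      rw [Finset.mul_sum]
      apply Finset.sum_congr rfl
      intro i hi
      have h1 : n + 1 - (i+1) = n - i := by omega
      rw [h1]
      push_cast
      linear_combination cb (n - i) * cb_key i
    have hfin : ((n:ℝ)+1) * S (n+1) = ((n:ℝ)+1) * (4 * S n) := by
      rw [show ((n:ℝ)+1) * S (n+1) = 2 * ((n:ℝ)+1) * S (n+1) - ((n:ℝ)+1) * S (n+1) by ring]
      nlinarith [hA2, hB2, hBA]
    have hn1 : (n:ℝ)+1 ≠ 0 := by positivity
    have h4 : S (n+1) = 4 * S n := mul_left_cancel₀ hn1 hfin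
    show S (n+1) = 4^(n+1)
    rw [h4, show S n = 4^n from ih]
    ring

lemma cb_le (k : ℕ) : Nat.centralBinom k ≤ 4^k := by
  induction k with
  | zero => simp [Nat.centralBinom]
  | succ k ih =>
    have h := Nat.succ_mul_centralBinom_succ k
    have h2 : (k+1) * Nat.centralBinom (k+1) ≤ (k+1) * (4 * 4^k) := by
      rw [h]
      calc 2 * (2*k+1) * Nat.centralBinom k ≤ 2 * (2*k+2) * 4^k := by
            exact Nat.mul_le_mul (by omega) ih
        _ = (k+1) * (4 * 4^k) := by ring
    have := Nat.le_of_mul_le_mul_left h2 (by omega)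
    simpa [pow_succ] using this.trans_eq (by ring)

lemma cb_summable {x : ℝ} (hx : 0 ≤ x) (hx4 : 4*x < 1) :
    Summable (fun k => cb k * x^k) := by
  refine Summable.of_nonneg_of_le (fun k => by unfold cb; positivity) (fun k => ?_)
    (summable_geometric_of_lt_one (by positivity) hx4)
  rw [mul_pow]
  apply mul_le_mul_of_nonneg_right _ (by positivity)
  have := cb_le k
  unfold cb
  exact_mod_cast this

lemma cb_hasSum {x : ℝ} (hx : 0 ≤ x) (hx4 : 4*x < 1) :
    HasSum (fun k => cb k * x^k) (1 / Real.sqrt (1-4*x)) := by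
  have hsum := cb_summable hx hx4
  set s := ∑' k, cb k * x^k with hs
  have hs0 : 0 ≤ s := tsum_nonneg (fun k => by unfold cb; positivity)
  have hnorm : Summable (fun k => ‖cb k * x^k‖) := by
    refine hsum.congr fun k => ?_
    rw [Real.norm_eq_abs, abs_of_nonneg (by unfold cb; positivity)]
  have hsq : s * s = (1-4*x)⁻¹ := by
    rw [hs, tsum_mul_tsum_eq_tsum_sum_antidiagonal_of_summable_norm hnorm hnorm]
    have : ∀ n : ℕ, ∑ kl ∈ Finset.HasAntidiagonal.antidiagonal n,
        (cb kl.1 * x^kl.1) * (cb kl.2 * x^kl.2) = (4*x)^n := by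
      intro n
      rw [Finset.Nat.sum_antidiagonal_eq_sum_range_succ_mk]
      have : ∀ i ∈ range (n+1), (cb i * x^i) * (cb (n-i) * x^(n-i))
          = (cb i * cb (n-i)) * x^n := by
        intro i hi
        rw [Finset.mem_range] at hi
        rw [show (cb i * x^i) * (cb (n-i) * x^(n-i)) = (cb i * cb (n-i)) * (x^i * x^(n-i)) by ring,
          ← pow_add, show i + (n-i) = n by omega]
      rw [Finset.sum_congr rfl this, ← Finset.sum_mul, cb_conv, mul_pow]
    rw [tsum_congr this, tsum_geometric_of_lt_one (by positivity) hx4]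
  have hxlt : (0:ℝ) < 1 - 4*x := by linarith
  have hval : s = 1 / Real.sqrt (1-4*x) := by
    rw [← Real.sqrt_mul_self hs0, hsq, one_div, ← Real.sqrt_inv]
  rw [← hval]
  exact hsum.hasSum

def eAux : (Σ n : ℕ, Fin (n/2+1)) ≃ ℕ × ℕ where
  toFun x := (x.2.1, x.1 - 2*x.2.1)
  invFun km := ⟨km.2 + 2*km.1, ⟨km.1, by omega⟩⟩
  left_inv := by
    rintro ⟨n, k, hk⟩
    have h2 : 2*k ≤ n := by omega
    have hn : n - 2*k + 2*k = n := by omega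
    exact Sigma.ext hn ((Fin.heq_ext_iff (by exact congrArg (fun m => m/2+1) hn)).2 rfl)
  right_inv := by
    rintro ⟨k, m⟩
    simp

lemma gen (z t : ℝ) (hz0 : 0 ≤ z) (hz1 : z < 1) (ht0 : 0 ≤ t) (ht1 : t ≤ 1) :
    HasSum (fun n => z^n * f n t) (1 / Real.sqrt ((1-z)*(1+z-2*z*t))) := by
  set b : ℝ := (1-t)/2*z with hb
  set c : ℝ := t*z with hc
  have hb0 : 0 ≤ b := by rw [hb]; exact mul_nonneg (by linarith) hz0
  have hc0 : 0 ≤ c := by rw [hc]; positivity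
  have hbc : 2*b + c = z := by rw [hb, hc]; ring
  have hc1 : c < 1 := by nlinarith
  have h1c : (0:ℝ) < 1 - c := by linarith
  have h1cb : (0:ℝ) < 1 - c - 2*b := by linarith
  set w : ℝ := (b/(1-c))^2 with hw
  have hw0 : 0 ≤ w := sq_nonneg _
  have hw4 : 4*w < 1 := by
    have h4b : 4*b^2 < (1-c)^2 := by nlinarith
    have hww : 4*w = 4*b^2/(1-c)^2 := by rw [hw]; field_simp
    rw [hww, div_lt_one (by positivity)]
    exact h4b
  set F : ℕ × ℕ → ℝ := fun km =>
    cb km.1 * ((km.2 + 2*km.1).choose (2*km.1) : ℝ) * b^(2*km.1) * c^km.2 with hF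
  set g : ℕ → ℝ := fun k => cb k * b^(2*k) * (1/(1-c)^(2*k+1)) with hg
  have hFnonneg : ∀ km : ℕ × ℕ, 0 ≤ F km := by
    intro km
    simp only [hF]
    exact mul_nonneg (mul_nonneg (mul_nonneg (by unfold cb; positivity)
      (Nat.cast_nonneg _)) (pow_nonneg hb0 _)) (pow_nonneg hc0 _)
  have hcnorm : ‖c‖ < 1 := by rw [Real.norm_eq_abs, abs_of_nonneg hc0]; exact hc1
  have hFk : ∀ k : ℕ, HasSum (fun m => F (k, m)) (g k) := by
    intro k
    have h := (hasSum_choose_mul_geometric_of_norm_lt_one (2*k) hcnorm).mul_left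
      (cb k * b^(2*k))
    have hv : g k = cb k * b^(2*k) * (1/(1-c)^(2*k+1)) := rfl
    rw [hv]
    refine h.congr_fun fun m => ?_
    simp only [hF]
    ring
  have hgsum : HasSum g ((1/(1-c)) * (1/Real.sqrt (1-4*w))) := by
    have h := (cb_hasSum hw0 hw4).mul_left (1/(1-c))
    refine h.congr_fun fun k => ?_
    simp only [hg, hw, div_pow]
    have h2 : (b^2)^k = b^(2*k) := by rw [← pow_mul]
    have h3 : ((1-c)^2)^k = (1-c)^(2*k) := by rw [← pow_mul]
    rw [h2, h3, pow_succ, one_div, one_div, mul_inv, div_eq_mul_inv]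
    ring
  have hFsummable : Summable F := by
    rw [summable_prod_of_nonneg hFnonneg]
    refine ⟨fun k => (hFk k).summable, ?_⟩
    refine hgsum.summable.congr fun k => ?_
    exact ((hFk k).tsum_eq).symm
  have hFS : HasSum F ((1/(1-c)) * (1/Real.sqrt (1-4*w))) := by
    have h1 := hFsummable.hasSum
    have h2 := h1.prod_fiberwise hFk
    rwa [h2.unique hgsum] at h1
  have hFe : HasSum (F ∘ eAux) ((1/(1-c)) * (1/Real.sqrt (1-4*w))) :=
    (Equiv.hasSum_iff eAux).2 hFS
  have hfiber : ∀ n : ℕ, HasSum (fun k : Fin (n/2+1) => (F ∘ eAux) ⟨n, k⟩) (z^n * f n t) := by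
    intro n
    have h := hasSum_fintype (fun k : Fin (n/2+1) => (F ∘ eAux) ⟨n, k⟩)
    have hv : ∑ k : Fin (n/2+1), (F ∘ eAux) ⟨n, k⟩ = z^n * f n t := by
      have he : ∀ k : Fin (n/2+1), (F ∘ eAux) ⟨n, k⟩ = F (k.1, n - 2*k.1) := fun k => rfl
      rw [Finset.sum_congr rfl (fun k _ => he k),
        Fin.sum_univ_eq_sum_range (fun k => F (k, n - 2*k))]
      unfold f
      rw [Finset.mul_sum]
      apply Finset.sum_congr rfl
      intro k hk
      rw [Finset.mem_range] at hk
      have h2 : 2*k ≤ n := by omega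
      have hn : n - 2*k + 2*k = n := by omega
      simp only [hF, hn]
      have hcb : cb k = ((2*k).choose k : ℝ) := by
        unfold cb; rw [Nat.centralBinom_eq_two_mul_choose]
      rw [hcb]
      simp only [hb, hc, mul_pow]
      rw [show z^n = z^(2*k) * z^(n-2*k) from by
        rw [← pow_add, show 2*k + (n-2*k) = n by omega]]
      ring
    rw [hv] at h
    exact h
  have hmain : HasSum (fun n => z^n * f n t) ((1/(1-c)) * (1/Real.sqrt (1-4*w))) :=
    hFe.sigma hfiber
  have key : (1-z)*(1+z-2*z*t) = (1-c)^2 * (1-4*w) := by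
    rw [hc, hw]
    field_simp
    ring
  have hval : 1 / Real.sqrt ((1-z)*(1+z-2*z*t)) = (1/(1-c)) * (1/Real.sqrt (1-4*w)) := by
    rw [key, Real.sqrt_mul (sq_nonneg _), Real.sqrt_sq h1c.le]
    rw [one_div, one_div, one_div, mul_inv]
  rw [hval]
  exact hmain

lemma f_zero_s12 (t : ℝ) : f 0 t = 1 := by
  simp [f]

lemma f_one_s12 (t : ℝ) : f 1 t = t := by
  simp [f]

theorem stmt_12 (p : ℝ) (hp : p ∈ Set.Ioo (0 : ℝ) 1) (t : ℝ)
    (ht : t ∈ Set.Icc (0 : ℝ) 1) :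
    HasSum (fun n : ℕ => p * (1 - p) ^ n * f (n + 2) t)
      (p / (1 - p) ^ 2 *
        (-((1 - p) * t + 1) + 1 / Real.sqrt (p * (2 - p + 2 * t * (p - 1))))) := by
  obtain ⟨hp0, hp1⟩ := hp
  obtain ⟨ht0, ht1⟩ := ht
  have hz0 : (0:ℝ) ≤ 1 - p := by linarith
  have hz1 : 1 - p < 1 := by linarith
  have hzne : (1:ℝ) - p ≠ 0 := by linarith [hp1]
  have hmain := gen (1-p) t hz0 hz1 ht0 ht1
  have harg : (1-(1-p))*(1+(1-p)-2*(1-p)*t) = p*(2-p+2*t*(p-1)) := by ring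
  rw [harg] at hmain
  have h2 := (hasSum_nat_add_iff' 2).2 hmain
  have hsum2 : ∑ i ∈ Finset.range 2, (1-p)^i * f i t = 1 + (1-p)*t := by
    rw [Finset.sum_range_succ, Finset.sum_range_one, f_zero_s12, f_one_s12]
    ring
  rw [hsum2] at h2
  have h3 := h2.mul_left (p/(1-p)^2)
  have hfun : (fun n : ℕ => p * (1 - p) ^ n * f (n + 2) t)
      = fun n : ℕ => (p/(1-p)^2) * ((1-p)^(n+2) * f (n+2) t) := by
    funext n
    rw [show (1-p)^(n+2) = (1-p)^n * (1-p)^2 from by ring]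
    field_simp
  have hval : p / (1 - p) ^ 2 *
      (-((1 - p) * t + 1) + 1 / Real.sqrt (p * (2 - p + 2 * t * (p - 1))))
      = (p/(1-p)^2) * (1 / Real.sqrt (p*(2-p+2*t*(p-1))) - (1 + (1-p)*t)) := by
    ring
  rw [hfun, hval]
  exact h3
end
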